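/- Over the alphabet A with A_s = {a,b} and A_e = {c,d}, the sentence φ_4 = ∀x.((∃^{=2} y.(x∼y ∧ a(y))) ↔ (∃^{=2} y.(x∼y ∧ d(y)))) satisfies Win(φ_4) = ℕ × {0} × ℕ: a triple (k_s,k_e,k_se) admits a process triple P with |P_θ| = k_θ and a P-winning P-strategy for φ_4 if and only if k_e = 0. -/

import Mathlib

namespace PSyn

/-! ### Basic objects: types, alphabets, processes, events, executions -/

/-- The three process types: system, environment, mixed. -/
inductive PType where
  | s | e | se
deriving DecidableEq

/-- A finite alphabet: letters are the naturals `0, …, n-1`;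
`sys a = true` means `a` is a system action (`a ∈ A_s`), otherwise `a ∈ A_e`. -/
structure Alphabet where
  n : ℕ
  sys : ℕ → Bool

/-- An event is a pair (letter, process identity). -/
abbrev Event := ℕ × ℕ

/-- A process triple `P = (P_s, P_e, P_se)`: pairwise disjoint finite sets of processes. -/
structure ProcTriple where
  Ps : Finset ℕ
  Pe : Finset ℕ
  Pse : Finset ℕ
  disj_se : Disjoint Ps Pe
  disj_sse : Disjoint Ps Pse
  disj_ese : Disjoint Pe Pse

def ProcTriple.ofType (P : ProcTriple) : PType → Finset ℕ
  | .s => P.Ps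
  | .e => P.Pe
  | .se => P.Pse

def ProcTriple.all (P : ProcTriple) : Finset ℕ := P.Ps ∪ P.Pe ∪ P.Pse

/-- `σ ∈ Σ_s = A_s × (P_s ∪ P_se)`. -/
def isSysEvent (Alph : Alphabet) (P : ProcTriple) (σ : Event) : Prop :=
  σ.1 < Alph.n ∧ Alph.sys σ.1 = true ∧ (σ.2 ∈ P.Ps ∨ σ.2 ∈ P.Pse)

/-- `σ ∈ Σ_e = A_e × (P_e ∪ P_se)`. -/
def isEnvEvent (Alph : Alphabet) (P : ProcTriple) (σ : Event) : Prop :=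
  σ.1 < Alph.n ∧ Alph.sys σ.1 = false ∧ (σ.2 ∈ P.Pe ∨ σ.2 ∈ P.Pse)

def isEvent (Alph : Alphabet) (P : ProcTriple) (σ : Event) : Prop :=
  isSysEvent Alph P σ ∨ isEnvEvent Alph P σ

/-- A finite or infinite word over events. -/
inductive Exec where
  | fin : List Event → Exec
  | inf : (ℕ → Event) → Exec

/-- A `P`-execution: every event is an event of `P` over the alphabet. -/
def Exec.valid (Alph : Alphabet) (P : ProcTriple) : Exec → Prop
  | .fin l => ∀ σ ∈ l, isEvent Alph P σ
  | .inf g => ∀ i, isEvent Alph P (g i)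

def Exec.at? : Exec → ℕ → Option Event
  | .fin l, i => l[i]?
  | .inf g, i => some (g i)

/-- The set of positions of an execution. -/
def Exec.posDom : Exec → ℕ → Prop
  | .fin l, i => i < l.length
  | .inf _, _ => True

/-- Elements of the structure associated with `(P, w)`:
`inl p` is a process, `inr i` is a position. -/
abbrev Elem := ℕ ⊕ ℕ

/-- The universe `P ⊎ Pos(w)`. -/
def elemDom (P : ProcTriple) (w : Exec) : Elem → Prop
  | .inl p => p ∈ P.all
  | .inr i => w.posDom i

/-- The process an element belongs to (a process belongs to itself; a position
to the process executing it).  Two elements are `∼`-equivalent iff they have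
the same process. -/
def procOf (w : Exec) : Elem → Option ℕ
  | .inl p => some p
  | .inr i => (w.at? i).map Prod.snd

def letterOf (w : Exec) : Elem → Option ℕ
  | .inl _ => none
  | .inr i => (w.at? i).map Prod.fst

/-! ### First-order logic FO_A[∼,<,+1] -/

/-- Syntax of `FO_A[∼,<,+1]`; variables are naturals, letters are naturals. -/
inductive FO where
  | ptype : PType → ℕ → FO
  | letter : ℕ → ℕ → FO
  | eq : ℕ → ℕ → FO
  | sim : ℕ → ℕ → FO
  | lt : ℕ → ℕ → FO
  | succ : ℕ → ℕ → FO
  | not : FO → FO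
  | or : FO → FO → FO
  | ex : ℕ → FO → FO

/-- Satisfaction of a formula in the structure `S_(P,w)` under a valuation. -/
def Sat (P : ProcTriple) (w : Exec) : (ℕ → Elem) → FO → Prop
  | v, .ptype θ x => ∃ p, v x = Sum.inl p ∧ p ∈ P.ofType θ
  | v, .letter a x => letterOf w (v x) = some a
  | v, .eq x y => v x = v y
  | v, .sim x y => (procOf w (v x)).isSome ∧ procOf w (v x) = procOf w (v y)
  | v, .lt x y => ∃ i j, v x = Sum.inr i ∧ v y = Sum.inr j ∧ i < j ∧ w.posDom j
  | v, .succ x y => ∃ i, v x = Sum.inr i ∧ v y = Sum.inr (i + 1) ∧ w.posDom (i + 1)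
  | v, .not φ => ¬ Sat P w v φ
  | v, .or φ ψ => Sat P w v φ ∨ Sat P w v ψ
  | v, .ex x φ => ∃ u : Elem, elemDom P w u ∧ Sat P w (Function.update v x u) φ

/-- Satisfaction for sentences: `(P,w) ⊨ φ` (the valuation is irrelevant for sentences). -/
def SatS (P : ProcTriple) (w : Exec) (φ : FO) : Prop :=
  Sat P w (fun _ => Sum.inl 0) φ

def FO.free : FO → Finset ℕ
  | .ptype _ x => {x}
  | .letter _ x => {x}
  | .eq x y => {x, y}
  | .sim x y => {x, y}
  | .lt x y => {x, y}
  | .succ x y => {x, y}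
  | .not φ => φ.free
  | .or φ ψ => φ.free ∪ ψ.free
  | .ex x φ => φ.free.erase x

/-- A sentence has no free variables. -/
def FO.isSentence (φ : FO) : Prop := φ.free = ∅

def FO.vars : FO → Finset ℕ
  | .ptype _ x => {x}
  | .letter _ x => {x}
  | .eq x y => {x, y}
  | .sim x y => {x, y}
  | .lt x y => {x, y}
  | .succ x y => {x, y}
  | .not φ => φ.vars
  | .or φ ψ => φ.vars ∪ ψ.vars
  | .ex x φ => insert x φ.vars

/-- The two-variable fragment: only the variable names `0` and `1` are used. -/
def FO.twoVar (φ : FO) : Prop := φ.vars ⊆ ({0, 1} : Finset ℕ)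

/-- The fragment `FO_A[∼]`: neither `<` nor `+1` occurs. -/
def FO.onlySim : FO → Prop
  | .lt _ _ => False
  | .succ _ _ => False
  | .not φ => φ.onlySim
  | .or φ ψ => φ.onlySim ∧ ψ.onlySim
  | .ex _ φ => φ.onlySim
  | _ => True

/-! ### The asynchronous synthesis game and `Win(φ)` -/

/-- A `P`-strategy for System: `none` plays ε, `some σ` proposes the system event `σ`. -/
abbrev Strategy := List Event → Option Event

/-- The strategy only proposes system events (its codomain is `Σ_s ∪ {ε}`). -/
def properStrategy (Alph : Alphabet) (P : ProcTriple) (f : Strategy) : Prop :=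
  ∀ u σ, f u = some σ → isSysEvent Alph P σ

/-- The prefix of length `i` of an execution. -/
def Exec.pre : Exec → ℕ → List Event
  | .fin l, i => l.take i
  | .inf g, i => (List.range i).map g

/-- `w` is `f`-compatible: every system event of `w` is the one proposed by `f`. -/
def compatible (Alph : Alphabet) (P : ProcTriple) (f : Strategy) (w : Exec) : Prop :=
  ∀ i σ, w.at? i = some σ → isSysEvent Alph P σ → f (w.pre i) = some σ

/-- `w` is `f`-fair. -/
def fair (Alph : Alphabet) (P : ProcTriple) (f : Strategy) : Exec → Prop
  | .fin l => f l = none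
  | .inf g =>
      {i : ℕ | f (Exec.pre (Exec.inf g) i) ≠ none}.Infinite →
      {j : ℕ | isSysEvent Alph P (g j)}.Infinite

/-- `f` is `P`-winning for `φ`. -/
def winningStrategy (Alph : Alphabet) (P : ProcTriple) (φ : FO) (f : Strategy) : Prop :=
  properStrategy Alph P f ∧
  ∀ w : Exec, w.valid Alph P → compatible Alph P f w → fair Alph P f w → SatS P w φ

/-- Triples of naturals, indexed by the process types (s, e, se). -/
abbrev Tok := ℕ × ℕ × ℕ

/-- `Win(φ)`: the set of triples `(k_s, k_e, k_se)` admitting a winning System strategy. -/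
def WinFO (Alph : Alphabet) (φ : FO) : Set Tok :=
  { k | ∃ P : ProcTriple,
      P.Ps.card = k.1 ∧ P.Pe.card = k.2.1 ∧ P.Pse.card = k.2.2 ∧
      ∃ f : Strategy, winningStrategy Alph P φ f }

/-! ### Parameterized vector games -/

/-- Locations: `L = {0,…,B}^A`. -/
abbrev Loc (n B : ℕ) := Fin n → Fin (B + 1)

/-- A local acceptance condition: for each process type a pair `(⋈, n)`,
where the Boolean `true` stands for `=` and `false` for `≥`. -/
abbrev LCond := (Bool × ℕ) × (Bool × ℕ) × (Bool × ℕ)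

/-- Configurations: `C : L → ℕ^T`. -/
abbrev GConfig (n B : ℕ) := Loc n B → Tok

/-- Transitions: maps `L × L → ℕ^T`. -/
abbrev GTrans (n B : ℕ) := Loc n B → Loc n B → Tok

/-- A parameterized vector game `G = (A, B, F)`. -/
structure PVG where
  Alph : Alphabet
  B : ℕ
  F : List (Loc Alph.n B → LCond)

def cmpHolds (c : Bool × ℕ) (m : ℕ) : Prop := if c.1 then m = c.2 else c.2 ≤ m

def lcondHolds (κ : LCond) (t : Tok) : Prop :=
  cmpHolds κ.1 t.1 ∧ cmpHolds κ.2.1 t.2.1 ∧ cmpHolds κ.2.2 t.2.2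

/-- `C ⊨ F`. -/
def accept (G : PVG) (C : GConfig G.Alph.n G.B) : Prop :=
  ∃ κ ∈ G.F, ∀ ℓ, lcondHolds (κ ℓ) (C ℓ)

/-- `ℓ + a`: increase coordinate `a` by one, capped at `B`. -/
def locAdd {n B : ℕ} (ℓ : Loc n B) (a : ℕ) : Loc n B :=
  fun i =>
    if (i : ℕ) = a then ⟨min ((ℓ i : ℕ) + 1) B, Nat.lt_succ_of_le (min_le_right _ _)⟩
    else ℓ i

/-- `ℓ + w` for a finite word `w` over the alphabet. -/
def locAddW {n B : ℕ} (ℓ : Loc n B) : List ℕ → Loc n B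
  | [] => ℓ
  | a :: u => locAddW (locAdd ℓ a) u

def isSysWord (Alph : Alphabet) (u : List ℕ) : Prop :=
  ∀ a ∈ u, a < Alph.n ∧ Alph.sys a = true

def isEnvWord (Alph : Alphabet) (u : List ℕ) : Prop :=
  ∀ a ∈ u, a < Alph.n ∧ Alph.sys a = false

/-- System transitions: values in `ℕ × {0} × ℕ` and moves along system words. -/
def isSysTrans (G : PVG) (τ : GTrans G.Alph.n G.B) : Prop :=
  ∀ ℓ ℓ', (τ ℓ ℓ').2.1 = 0 ∧
    (τ ℓ ℓ' ≠ ((0, 0, 0) : Tok) → ∃ u : List ℕ, isSysWord G.Alph u ∧ ℓ' = locAddW ℓ u)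

/-- Environment transitions: values in `{0} × ℕ × ℕ` and moves along environment words. -/
def isEnvTrans (G : PVG) (τ : GTrans G.Alph.n G.B) : Prop :=
  ∀ ℓ ℓ', (τ ℓ ℓ').1 = 0 ∧
    (τ ℓ ℓ' ≠ ((0, 0, 0) : Tok) → ∃ u : List ℕ, isEnvWord G.Alph u ∧ ℓ' = locAddW ℓ u)

def outm {n B : ℕ} (τ : GTrans n B) (ℓ : Loc n B) : Tok := ∑ ℓ' : Loc n B, τ ℓ ℓ'

def inm {n B : ℕ} (τ : GTrans n B) (ℓ : Loc n B) : Tok := ∑ ℓ' : Loc n B, τ ℓ' ℓ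

/-- Componentwise order on `ℕ^T`. -/
def tokLe (s t : Tok) : Prop := s.1 ≤ t.1 ∧ s.2.1 ≤ t.2.1 ∧ s.2.2 ≤ t.2.2

def applicable {n B : ℕ} (τ : GTrans n B) (C : GConfig n B) : Prop :=
  ∀ ℓ, tokLe (outm τ ℓ) (C ℓ)

/-- `τ(C)(ℓ) = C(ℓ) − out_τ(ℓ) + in_τ(ℓ)` (componentwise). -/
def applyT {n B : ℕ} (τ : GTrans n B) (C : GConfig n B) : GConfig n B :=
  fun ℓ => C ℓ - outm τ ℓ + inm τ ℓ

/-- The configuration reached from `C0` after applying the transitions `ts` in order. -/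
def confAt {n B : ℕ} (C0 : GConfig n B) (ts : List (GTrans n B)) : GConfig n B :=
  ts.foldl (fun C τ => applyT τ C) C0

/-- A valid `C0`-play, represented by its list of transitions
(step `i`, 0-based, is System's if `i` is even, Environment's if `i` is odd). -/
def validPlay (G : PVG) (C0 : GConfig G.Alph.n G.B)
    (ts : List (GTrans G.Alph.n G.B)) : Prop :=
  ∀ i (h : i < ts.length),
    applicable (ts.get ⟨i, h⟩) (confAt C0 (ts.take i)) ∧
    (i % 2 = 0 → isSysTrans G (ts.get ⟨i, h⟩) ∧ accept G (confAt C0 (ts.take (i + 1)))) ∧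
    (i % 2 = 1 → isEnvTrans G (ts.get ⟨i, h⟩) ∧ ¬ accept G (confAt C0 (ts.take (i + 1))))

/-- A strategy for System in the game: a partial map from plays to transitions. -/
abbrev GStrat (n B : ℕ) := List (GTrans n B) → Option (GTrans n B)

/-- `f(C)` is defined, and whenever `f(π) = τ` for a valid play π ending in `C_i`,
`τ` is a system transition, applicable at `C_i`, and `τ(C_i) ⊨ F`. -/
def properGStrat (G : PVG) (C0 : GConfig G.Alph.n G.B) (f : GStrat G.Alph.n G.B) : Prop :=
  (f []).isSome ∧
  ∀ ts τ, validPlay G C0 ts → f ts = some τ →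
    isSysTrans G τ ∧ applicable τ (confAt C0 ts) ∧ accept G (applyT τ (confAt C0 ts))

def gCompatible {n B : ℕ} (f : GStrat n B) (ts : List (GTrans n B)) : Prop :=
  ∀ i (h : i < ts.length), i % 2 = 0 → f (ts.take i) = some (ts.get ⟨i, h⟩)

def gMaximal (G : PVG) (C0 : GConfig G.Alph.n G.B) (f : GStrat G.Alph.n G.B)
    (ts : List (GTrans G.Alph.n G.B)) : Prop :=
  ¬ ∃ ts', ts <+: ts' ∧ ts ≠ ts' ∧ validPlay G C0 ts' ∧ gCompatible f ts'

def winningGStrat (G : PVG) (C0 : GConfig G.Alph.n G.B) (f : GStrat G.Alph.n G.B) : Prop :=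
  properGStrat G C0 f ∧
  ∀ ts, validPlay G C0 ts → gCompatible f ts → gMaximal G C0 f ts →
    accept G (confAt C0 ts)

/-- A configuration is winning for System if System has a winning strategy from it. -/
def winningConf (G : PVG) (C0 : GConfig G.Alph.n G.B) : Prop :=
  ∃ f, winningGStrat G C0 f

/-- The all-zero location `ℓ_0`. -/
def loc0 (n B : ℕ) : Loc n B := fun _ => 0

/-- `C_k⃗`: all `k⃗` tokens on `ℓ_0`. -/
def initConfig {n B : ℕ} (k : Tok) : GConfig n B :=
  Function.update (fun _ => ((0, 0, 0) : Tok)) (loc0 n B) k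

/-- `Win(G)`. -/
def WinG (G : PVG) : Set Tok :=
  { k | winningConf G (initConfig k) }

/-! ### Environment chains and constants of a game -/

/-- `C <_e C'`. -/
def envStep (G : PVG) (C C' : GConfig G.Alph.n G.B) : Prop :=
  C ≠ C' ∧ ∃ τ, isEnvTrans G τ ∧ applicable τ C ∧ C' = applyT τ C

/-- There is a chain `C = C_0 <_e C_1 <_e … <_e C_d`. -/
def hasChain (G : PVG) (C : GConfig G.Alph.n G.B) (d : ℕ) : Prop :=
  ∃ cs : ℕ → GConfig G.Alph.n G.B, cs 0 = C ∧ ∀ i < d, envStep G (cs i) (cs (i + 1))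

/-- `C ∈ Conf_d`: the longest `<_e`-chain starting in `C` has length exactly `d`. -/
def ConfD (G : PVG) (C : GConfig G.Alph.n G.B) (d : ℕ) : Prop :=
  hasChain G C d ∧ ¬ hasChain G C (d + 1)

def lcondMax (κ : LCond) : ℕ := max κ.1.2 (max κ.2.1.2 κ.2.2.2)

/-- `K`: the largest constant occurring in the acceptance condition `F`. -/
def maxConst (G : PVG) : ℕ :=
  (G.F.map fun κ => Finset.univ.sup fun ℓ : Loc G.Alph.n G.B => lcondMax (κ ℓ)).foldr max 0

/-- `|A_e|`: the number of environment letters. -/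
def envCard (Alph : Alphabet) : ℕ :=
  ((Finset.range Alph.n).filter fun a => Alph.sys a = false).card

/-- `|L| = (B+1)^|A|`. -/
def numLoc (G : PVG) : ℕ := (G.B + 1) ^ G.Alph.n

/-! ### Cutoffs -/

/-- `k⃗_0` is a cutoff of `W` with respect to `(N_s, N_e, N_se)`. -/
def IsCutoff (Ns Ne Nse : Set ℕ) (W : Set Tok) (k0 : Tok) : Prop :=
  k0.1 ∈ Ns ∧ k0.2.1 ∈ Ne ∧ k0.2.2 ∈ Nse ∧
  ((∀ k : Tok, k.1 ∈ Ns → k.2.1 ∈ Ne → k.2.2 ∈ Nse →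
      k0.1 ≤ k.1 → k0.2.1 ≤ k.2.1 → k0.2.2 ≤ k.2.2 → k ∈ W) ∨
   (∀ k : Tok, k.1 ∈ Ns → k.2.1 ∈ Ne → k.2.2 ∈ Nse →
      k0.1 ≤ k.1 → k0.2.1 ≤ k.2.1 → k0.2.2 ≤ k.2.2 → k ∉ W))

/-! ### Counting formulas and the normal form for FO[∼] -/

def FO.and (φ ψ : FO) : FO := FO.not (FO.or (FO.not φ) (FO.not ψ))

def FO.imp (φ ψ : FO) : FO := FO.or (FO.not φ) ψ

def FO.iff (φ ψ : FO) : FO := FO.and (φ.imp ψ) (ψ.imp φ)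

def FO.all (x : ℕ) (φ : FO) : FO := FO.not (FO.ex x (FO.not φ))

def trueFO : FO := FO.eq 0 0

def bigAnd (l : List FO) : FO := l.foldr FO.and trueFO

def bigOr (l : List FO) : FO := l.foldr FO.or (FO.not trueFO)

/-- `∃^{≥m} y. (mk y)`: there are at least `m` distinct witnesses; the witness
variables are `base, base+1, …, base+m-1`. -/
def exGe (m base : ℕ) (mk : ℕ → FO) : FO :=
  let distinct : List FO :=
    (List.range m).flatMap fun i =>
      ((List.range m).filter fun j => decide (i < j)).map fun j =>
        FO.not (FO.eq (base + i) (base + j))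
  let body : FO :=
    FO.and (bigAnd distinct) (bigAnd ((List.range m).map fun i => mk (base + i)))
  ((List.range m).map (base + ·)).foldr FO.ex body

/-- `∃^{=m} y. (mk y) := ∃^{≥m} y. (mk y) ∧ ¬ ∃^{≥m+1} y. (mk y)`. -/
def exEq (m base : ℕ) (mk : ℕ → FO) : FO :=
  FO.and (exGe m base mk) (FO.not (exGe (m + 1) base mk))

/-- `ψ_{B,ℓ}(y)`: in the class of `y`, each letter `a` occurs exactly `ℓ(a)` times
if `ℓ(a) < B`, and at least `ℓ(a)` times if `ℓ(a) = B`. -/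
def psiCount (n B : ℕ) (ℓ : ℕ → ℕ) (y : ℕ) : FO :=
  bigAnd ((List.range n).map fun a =>
    if ℓ a < B then
      exEq (ℓ a) (y + 1) (fun z => FO.and (FO.sim y z) (FO.letter a z))
    else
      exGe (ℓ a) (y + 1) (fun z => FO.and (FO.sim y z) (FO.letter a z)))

/-- `∃^{⋈m} y. (θ(y) ∧ ψ_{B,ℓ}(y))`, where `⋈` is `=` if `isEq` and `≥` otherwise. -/
def nfAtom (n B : ℕ) (isEq : Bool) (m : ℕ) (θ : PType) (ℓ : ℕ → ℕ) : FO :=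
  let mk : ℕ → FO := fun y => FO.and (FO.ptype θ y) (psiCount n B ℓ y)
  if isEq then exEq m 0 mk else exGe m 0 mk

/-! ### The normalized synthesis problem -/

/-- A normalized strategy: maps finite executions to finite system words. -/
abbrev NormStrategy := List Event → Option (List Event)

/-- A normalized `P`-execution, given by its block decomposition `bs`
(`bs[j]` with `j` even is a System block, `j` odd an Environment block;
this corresponds to the 1-based indexing `w = w_1 … w_n` of the paper). -/
def NormExec (Alph : Alphabet) (P : ProcTriple) (φ : FO) (bs : List (List Event)) : Prop :=
  1 ≤ bs.length ∧
  ∀ j (h : j < bs.length),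
    (j % 2 = 0 → (∀ σ ∈ bs.get ⟨j, h⟩, isSysEvent Alph P σ) ∧
        SatS P (Exec.fin ((bs.take (j + 1)).flatten)) φ) ∧
    (j % 2 = 1 → (∀ σ ∈ bs.get ⟨j, h⟩, isEnvEvent Alph P σ) ∧
        ¬ SatS P (Exec.fin ((bs.take (j + 1)).flatten)) φ)

/-- Properness of a normalized strategy: `f(ε)` is defined, outputs are system
words, and `(P, w · f(w)) ⊨ φ` whenever `f(w)` is defined. -/
def properNStrat (Alph : Alphabet) (P : ProcTriple) (φ : FO) (f : NormStrategy) : Prop :=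
  (f []).isSome ∧
  ∀ w u, f w = some u →
    (∀ σ ∈ u, isSysEvent Alph P σ) ∧ SatS P (Exec.fin (w ++ u)) φ

def nCompatible (f : NormStrategy) (bs : List (List Event)) : Prop :=
  ∀ j (h : j < bs.length), j % 2 = 0 → f ((bs.take j).flatten) = some (bs.get ⟨j, h⟩)

def nMaximal (Alph : Alphabet) (P : ProcTriple) (φ : FO) (f : NormStrategy)
    (bs : List (List Event)) : Prop :=
  ¬ ∃ bs', bs <+: bs' ∧ bs ≠ bs' ∧ NormExec Alph P φ bs' ∧ nCompatible f bs'

def winningNStrategy (Alph : Alphabet) (P : ProcTriple) (φ : FO) (f : NormStrategy) : Prop :=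
  properNStrat Alph P φ f ∧
  ∀ bs, NormExec Alph P φ bs → nCompatible f bs → nMaximal Alph P φ f bs →
    SatS P (Exec.fin bs.flatten) φ

/-- `NWin(φ)`. -/
def NWin (Alph : Alphabet) (φ : FO) : Set Tok :=
  { k | ∃ P : ProcTriple,
      P.Ps.card = k.1 ∧ P.Pe.card = k.2.1 ∧ P.Pse.card = k.2.2 ∧
      ∃ f : NormStrategy, winningNStrategy Alph P φ f }

/-! ### Concrete alphabet and formulas of the examples -/

/-- The alphabet with `A_s = {a, b} = {0, 1}` and `A_e = {c, d} = {2, 3}`. -/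
def alph4 : Alphabet := ⟨4, fun a => decide (a < 2)⟩

/-- `φ_1 = ∀x.((s(x) ∨ se(x)) → ∃y.(x∼y ∧ (a(y) ∨ b(y))))`. -/
def phi1 : FO :=
  FO.all 0 (FO.imp (FO.or (FO.ptype .s 0) (FO.ptype .se 0))
    (FO.ex 1 (FO.and (FO.sim 0 1) (FO.or (FO.letter 0 1) (FO.letter 1 1)))))

/-- `φ_4 = ∀x.((∃^{=2}y.(x∼y ∧ a(y))) ↔ (∃^{=2}y.(x∼y ∧ d(y))))`. -/
def phi4 : FO :=
  FO.all 0 (FO.iff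
    (exEq 2 1 fun y => FO.and (FO.sim 0 y) (FO.letter 0 y))
    (exEq 2 1 fun y => FO.and (FO.sim 0 y) (FO.letter 3 y)))

/-- Vectors `{0,…,3}^{4}` as functions `ℕ → ℕ`. -/
def vec4 (v0 v1 v2 v3 : ℕ) : ℕ → ℕ := fun i => [v0, v1, v2, v3].getD i 0

def allVecs4 : List (ℕ → ℕ) :=
  (List.range 4).flatMap fun v0 =>
    (List.range 4).flatMap fun v1 =>
      (List.range 4).flatMap fun v2 =>
        (List.range 4).map fun v3 => vec4 v0 v1 v2 v3

/-- `Z`: vectors with `ℓ(a) = 2 ≠ ℓ(d)` or `ℓ(d) = 2 ≠ ℓ(a)` (letters `a = 0`, `d = 3`). -/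
def Zvecs : List (ℕ → ℕ) :=
  allVecs4.filter fun ℓ => decide ((ℓ 0 = 2 ∧ ℓ 3 ≠ 2) ∨ (ℓ 3 = 2 ∧ ℓ 0 ≠ 2))

/-- `φ_4' = ⋀_{θ ∈ T, ℓ ∈ Z} ∃^{=0} y.(θ(y) ∧ ψ_{3,ℓ}(y))`. -/
def phi4' : FO :=
  bigAnd (([PType.s, PType.e, PType.se].flatMap fun θ =>
    Zvecs.map fun ℓ => nfAtom 4 3 true 0 θ ℓ))

/-! ### Effective encodings of inputs (for decidability statements) -/

def decodePType (k : ℕ) : PType :=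
  if k % 3 = 0 then .s else if k % 3 = 1 then .e else .se

/-- Surjective decoding of formulas from naturals (with fuel). -/
def decodeFOAux : ℕ → ℕ → FO
  | 0, _ => FO.eq 0 0
  | fuel + 1, c =>
    let t := c % 9
    let m := c / 9
    let a := m.unpair.1
    let b := m.unpair.2
    if t = 0 then FO.ptype (decodePType a) b
    else if t = 1 then FO.letter a b
    else if t = 2 then FO.eq a b
    else if t = 3 then FO.sim a b
    else if t = 4 then FO.lt a b
    else if t = 5 then FO.succ a b
    else if t = 6 then FO.not (decodeFOAux fuel m)
    else if t = 7 then FO.or (decodeFOAux fuel a) (decodeFOAux fuel b)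
    else FO.ex a (decodeFOAux fuel b)

def decodeFO (c : ℕ) : FO := decodeFOAux c c

/-- Decoding an input of the synthesis/satisfiability problems: an alphabet
(size and partition) together with a formula. -/
def decodeFOInput (c : ℕ) : Alphabet × FO :=
  (⟨c.unpair.1.unpair.1, fun a => (c.unpair.1.unpair.2).testBit a⟩, decodeFO c.unpair.2)

def decodeBN (m : ℕ) : Bool × ℕ := (decide (m % 2 = 0), m / 2)

def decodeLCond (m : ℕ) : LCond :=
  (decodeBN m.unpair.1, decodeBN m.unpair.2.unpair.1, decodeBN m.unpair.2.unpair.2)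

/-- An explicit index of a location, used to decode local acceptance conditions. -/
def locIndex {n B : ℕ} (ℓ : Loc n B) : ℕ := ∑ i : Fin n, (ℓ i : ℕ) * (B + 1) ^ (i : ℕ)

/-- Decoding a parameterized vector game from a natural number. -/
def decodeGame (c : ℕ) : PVG :=
  let n := c.unpair.1.unpair.1
  let sy := c.unpair.1.unpair.2
  let B := c.unpair.2.unpair.1
  let Fc := c.unpair.2.unpair.2
  { Alph := ⟨n, fun a => sy.testBit a⟩
    B := B
    F := (Denumerable.ofNat (List ℕ) Fc).map fun kc =>
      fun ℓ => decodeLCond ((Denumerable.ofNat (List ℕ) kc).getD (locIndex ℓ) 0) }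

/-!
If there is an environment process `p`, Environment plays `d` twice on `p` and from then on
lets System move whenever it proposes an event, playing `c` on `p` otherwise. System can never
play `a` on `p`, so `p` ends with two `d`'s and no `a`, violating `φ₄`.

If there is none, System plays `a` on a process whenever it carries fewer than `min(#d, 3)`
`a`'s. This keeps `#a ≤ min(#d, 3)`, so each process receives at most three `a`'s, System
proposes only finitely often along a fair play, and eventually `#a = min(#d, 3)` everywhere;
as `min(n, 3) = 2 ↔ n = 2`, the final counts satisfy `#a = 2 ↔ #d = 2`.
-/

end PSyn

open Filter

theorem Set.two_lt_encard_iff {α : Type*} {s : Set α} :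
    2 < s.encard ↔ ∃ a b c, a ∈ s ∧ b ∈ s ∧ c ∈ s ∧ a ≠ b ∧ a ≠ c ∧ b ≠ c := by
  constructor
  · intro h
    obtain ⟨t, hts, ht⟩ := Set.exists_subset_encard_eq (Order.add_one_le_of_lt h)
    obtain ⟨a, b, c, hab, hac, hbc, rfl⟩ := Set.encard_eq_three.mp ht
    exact ⟨a, b, c, hts (by simp), hts (by simp), hts (by simp), hab, hac, hbc⟩
  · rintro ⟨a, b, c, ha, hb, hc, hab, hac, hbc⟩
    calc (2 : ℕ∞) < 3 := by norm_num
      _ = ({a, b, c} : Set α).encard := (Set.encard_eq_three.mpr ⟨a, b, c, hab, hac, hbc, rfl⟩).symm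
      _ ≤ s.encard := Set.encard_le_encard (by simp [Set.insert_subset_iff, ha, hb, hc])

theorem ENat.eq_two_iff {e : ℕ∞} : e = 2 ↔ 1 < e ∧ ¬ 2 < e := by
  induction e using ENat.recTopCoe with
  | top => simp
  | coe n => norm_cast; omega

namespace Nat

variable {p : ℕ → Prop} [DecidablePred p]

theorem eventually_lt_count_of_infinite (hp : {i | p i}.Infinite) (m : ℕ) :
    ∀ᶠ N in atTop, m < count p N := by
  refine eventually_atTop.mpr ⟨nth p (m + 1), fun N hN => ?_⟩
  calc m < count p (nth p (m + 1)) := by rw [count_nth_of_infinite hp]; omega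
    _ ≤ count p N := count_monotone p hN

theorem finite_setOf_of_count_le (K : ℕ) (h : ∀ N, count p N ≤ K) : {i | p i}.Finite := by
  by_contra hp
  obtain ⟨N, hN⟩ := (eventually_lt_count_of_infinite hp K).exists
  exact absurd (h N) (not_le.mpr hN)

theorem eventually_count_eq_card (hp : {i | p i}.Finite) :
    ∀ᶠ N in atTop, count p N = hp.toFinset.card := by
  refine eventually_atTop.mpr ⟨hp.toFinset.sup id + 1, fun N hN => ?_⟩
  rw [count_eq_card_filter_range]
  congr 1
  ext i
  simp only [Finset.mem_filter, Finset.mem_range, Set.Finite.mem_toFinset, Set.mem_ofPred_eq,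
    and_iff_right_iff_imp]
  intro hi
  have : i ≤ hp.toFinset.sup id := Finset.le_sup (f := id) (by simpa using hi)
  omega

theorem encard_setOf_eq_iff_eventually_count_eq {m : ℕ} :
    {i | p i}.encard = m ↔ ∀ᶠ N in atTop, count p N = m := by
  by_cases hp : {i | p i}.Finite
  · have hcard := eventually_count_eq_card hp
    rw [hp.encard_eq_coe_toFinset_card, Nat.cast_inj]
    refine ⟨fun h => hcard.mono fun N hN => hN.trans h, fun h => ?_⟩
    obtain ⟨N, h1, h2⟩ := (hcard.and h).exists
    exact h1.symm.trans h2
  · rw [Set.Infinite.encard_eq hp]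
    simp only [ENat.top_ne_natCast, false_iff]
    intro h
    obtain ⟨N, h1, h2⟩ := ((eventually_lt_count_of_infinite hp m).and h).exists
    omega

end Nat

namespace PSyn

namespace Exec

variable {w : Exec}

theorem pre_zero : w.pre 0 = [] := by
  cases w <;> simp [Exec.pre]

theorem pre_succ (n : ℕ) : w.pre (n + 1) = w.pre n ++ (w.at? n).toList := by
  cases w with
  | fin l => simpa [Exec.pre, Exec.at?] using List.take_add_one
  | inf g => simp [Exec.pre, Exec.at?, List.range_succ]

theorem pre_fin_of_length_le {l : List Event} {N : ℕ} (h : l.length ≤ N) :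
    (Exec.fin l).pre N = l := by
  simp [Exec.pre, List.take_of_length_le h]

theorem count_pre (v : Event) (N : ℕ) :
    (w.pre N).count v = Nat.count (fun i => w.at? i = some v) N := by
  induction N with
  | zero => simp [pre_zero]
  | succ N ih =>
    rw [pre_succ, List.count_append, ih, Nat.count_succ]
    cases w.at? N <;> simp [List.count_singleton]

theorem encard_setOf_at?_eq_iff (v : Event) (m : ℕ) :
    {i | w.at? i = some v}.encard = m ↔ ∀ᶠ N in atTop, (w.pre N).count v = m := by
  simp only [count_pre]
  exact Nat.encard_setOf_eq_iff_eventually_count_eq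

theorem posDom_of_at?_eq_some {i : ℕ} {σ : Event} (h : w.at? i = some σ) : w.posDom i := by
  cases w with
  | fin l => exact (List.getElem?_eq_some_iff.mp h).1
  | inf g => trivial

theorem isSome_at?_of_posDom {i : ℕ} (h : w.posDom i) : (w.at? i).isSome := by
  cases w with
  | fin l => simpa [Exec.at?, Exec.posDom] using h
  | inf g => rfl

theorem isEvent_of_at?_eq_some {Alph : Alphabet} {P : ProcTriple} (hv : w.valid Alph P)
    {i : ℕ} {σ : Event} (h : w.at? i = some σ) : isEvent Alph P σ := by
  cases w with
  | fin l => exact hv σ (List.mem_of_getElem? h)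
  | inf g => exact Option.some_injective _ h ▸ hv i

end Exec

theorem isSysEvent_alph4_iff {P : ProcTriple} {σ : Event} :
    isSysEvent alph4 P σ ↔ σ.1 < 2 ∧ (σ.2 ∈ P.Ps ∨ σ.2 ∈ P.Pse) := by
  simp only [isSysEvent, alph4, decide_eq_true_eq]
  constructor
  · exact fun h => ⟨h.2.1, h.2.2⟩
  · exact fun h => ⟨by omega, h⟩

theorem isEnvEvent_alph4_iff {P : ProcTriple} {σ : Event} :
    isEnvEvent alph4 P σ ↔ 2 ≤ σ.1 ∧ σ.1 < 4 ∧ (σ.2 ∈ P.Pe ∨ σ.2 ∈ P.Pse) := by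
  simp only [isEnvEvent, alph4, decide_eq_false_iff_not, not_lt]
  tauto

section Semantics

variable {P : ProcTriple} {w : Exec}

theorem sat_and {v : ℕ → Elem} {φ ψ : FO} : Sat P w v (φ.and ψ) ↔ Sat P w v φ ∧ Sat P w v ψ := by
  simp [FO.and, Sat]

theorem sat_iff {v : ℕ → Elem} {φ ψ : FO} : Sat P w v (φ.iff ψ) ↔ (Sat P w v φ ↔ Sat P w v ψ) := by
  simp only [FO.iff, FO.imp, sat_and, Sat]
  tauto

theorem sim_letter_iff {x u : Elem} {q a : ℕ} (hq : procOf w x = some q) :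
    (((procOf w x).isSome ∧ procOf w x = procOf w u) ∧ letterOf w u = some a) ↔
      ∃ i, u = .inr i ∧ w.at? i = some (a, q) := by
  rw [hq]
  cases u with
  | inl p => simp [letterOf]
  | inr i =>
    cases h : w.at? i with
    | none => simp [letterOf, h]
    | some σ =>
      simp only [procOf, letterOf, h, Option.isSome_some, Option.map_some, Option.some.injEq,
        Sum.inr.injEq, exists_eq_left', true_and, Prod.ext_iff]
      grind

theorem sat_exGe_two_iff {v : ℕ → Elem} {a q : ℕ} (hq : procOf w (v 0) = some q) :
    Sat P w v (exGe 2 1 fun y => (FO.sim 0 y).and (FO.letter a y)) ↔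
      1 < {i | w.at? i = some (a, q)}.encard := by
  have hform : (exGe 2 1 fun y => (FO.sim 0 y).and (FO.letter a y)) =
      FO.ex 1 (FO.ex 2 (((FO.eq 1 2).not.and trueFO).and
        (((FO.sim 0 1).and (FO.letter a 1)).and
          (((FO.sim 0 2).and (FO.letter a 2)).and trueFO)))) :=
    rfl
  rw [hform, Set.one_lt_encard_iff]
  simp only [Sat, FO.and, trueFO, Function.update_apply, not_or, not_not, and_true,
    Nat.reduceEqDiff, ite_true, ite_false, sim_letter_iff hq]
  constructor
  · rintro ⟨_, -, _, -, hne, ⟨i, rfl, hi⟩, ⟨j, rfl, hj⟩⟩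
    exact ⟨i, j, hi, hj, fun h => hne (h ▸ rfl)⟩
  · rintro ⟨i, j, hi, hj, hne⟩
    exact ⟨.inr i, Exec.posDom_of_at?_eq_some hi, .inr j, Exec.posDom_of_at?_eq_some hj,
      by simpa using hne, ⟨i, rfl, hi⟩, ⟨j, rfl, hj⟩⟩

theorem sat_exGe_three_iff {v : ℕ → Elem} {a q : ℕ} (hq : procOf w (v 0) = some q) :
    Sat P w v (exGe 3 1 fun y => (FO.sim 0 y).and (FO.letter a y)) ↔
      2 < {i | w.at? i = some (a, q)}.encard := by
  have hform : (exGe 3 1 fun y => (FO.sim 0 y).and (FO.letter a y)) =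
      FO.ex 1 (FO.ex 2 (FO.ex 3 (((FO.eq 1 2).not.and (((FO.eq 1 3).not.and
        (((FO.eq 2 3).not.and trueFO))))).and
        (((FO.sim 0 1).and (FO.letter a 1)).and (((FO.sim 0 2).and (FO.letter a 2)).and
          (((FO.sim 0 3).and (FO.letter a 3)).and trueFO)))))) :=
    rfl
  rw [hform, Set.two_lt_encard_iff]
  simp only [Sat, FO.and, trueFO, Function.update_apply, not_or, not_not, and_true,
    Nat.reduceEqDiff, ite_true, ite_false, sim_letter_iff hq]
  constructor
  · rintro ⟨_, -, _, -, _, -, ⟨h12, h13, h23⟩, ⟨i, rfl, hi⟩, ⟨j, rfl, hj⟩, ⟨k, rfl, hk⟩⟩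
    exact ⟨i, j, k, hi, hj, hk, fun h => h12 (h ▸ rfl), fun h => h13 (h ▸ rfl),
      fun h => h23 (h ▸ rfl)⟩
  · rintro ⟨i, j, k, hi, hj, hk, hij, hik, hjk⟩
    exact ⟨.inr i, Exec.posDom_of_at?_eq_some hi, .inr j, Exec.posDom_of_at?_eq_some hj,
      .inr k, Exec.posDom_of_at?_eq_some hk, ⟨by simpa using hij, by simpa using hik,
      by simpa using hjk⟩, ⟨i, rfl, hi⟩, ⟨j, rfl, hj⟩, ⟨k, rfl, hk⟩⟩

theorem sat_exEq_two_iff {v : ℕ → Elem} {a q : ℕ} (hq : procOf w (v 0) = some q) :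
    Sat P w v (exEq 2 1 fun y => (FO.sim 0 y).and (FO.letter a y)) ↔
      {i | w.at? i = some (a, q)}.encard = 2 := by
  rw [ENat.eq_two_iff, exEq, sat_and]
  exact (sat_exGe_two_iff hq).and (not_congr (sat_exGe_three_iff hq))

theorem exists_procOf_eq_some_mem_all {Alph : Alphabet} (hv : w.valid Alph P) {x : Elem}
    (hx : elemDom P w x) : ∃ q ∈ P.all, procOf w x = some q := by
  cases x with
  | inl p => exact ⟨p, hx, rfl⟩
  | inr i =>
    obtain ⟨σ, hσ⟩ := Option.isSome_iff_exists.mp (Exec.isSome_at?_of_posDom hx)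
    refine ⟨σ.2, ?_, by simp [procOf, hσ]⟩
    have : σ.2 ∈ P.Ps ∨ σ.2 ∈ P.Pe ∨ σ.2 ∈ P.Pse := by
      rcases Exec.isEvent_of_at?_eq_some hv hσ with ⟨-, -, h⟩ | ⟨-, -, h⟩ <;> tauto
    simp only [ProcTriple.all, Finset.mem_union]
    tauto

theorem satS_phi4_iff {Alph : Alphabet} (hv : w.valid Alph P) :
    SatS P w phi4 ↔ ∀ q ∈ P.all,
      ({i | w.at? i = some (0, q)}.encard = 2 ↔ {i | w.at? i = some (3, q)}.encard = 2) := by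
  have hphi : ∀ x q, procOf w x = some q →
      (Sat P w (Function.update (fun _ => .inl 0) 0 x)
        ((exEq 2 1 fun y => (FO.sim 0 y).and (FO.letter 0 y)).iff
          (exEq 2 1 fun y => (FO.sim 0 y).and (FO.letter 3 y))) ↔
      ({i | w.at? i = some (0, q)}.encard = 2 ↔ {i | w.at? i = some (3, q)}.encard = 2)) := by
    intro x q hq
    have hq' : procOf w (Function.update (fun _ => Sum.inl 0) 0 x 0) = some q := by simpa using hq
    rw [sat_iff, sat_exEq_two_iff hq', sat_exEq_two_iff hq']
  simp only [SatS, phi4, FO.all, Sat, not_exists, not_and, not_not]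
  constructor
  · exact fun h q hq => (hphi (.inl q) q rfl).mp (h _ hq)
  · intro h x hx
    obtain ⟨q, hqP, hq⟩ := exists_procOf_eq_some_mem_all hv hx
    exact (hphi x q hq).mpr (h q hqP)

end Semantics

theorem isSysEvent_of_at?_eq_some {P : ProcTriple} {w : Exec} (hv : w.valid alph4 P) {i : ℕ}
    {σ : Event} (h : w.at? i = some σ) (hσ : σ.1 < 2) : isSysEvent alph4 P σ := by
  rcases Exec.isEvent_of_at?_eq_some hv h with hsys | henv
  · exact hsys
  · exact absurd (isEnvEvent_alph4_iff.mp henv).1 (by omega)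

section Balance

variable {P : ProcTriple}

open Classical in
noncomputable def balanceStrategy (P : ProcTriple) : Strategy := fun u =>
  if h : ∃ q ∈ P.Ps ∪ P.Pse, u.count (0, q) < min (u.count (3, q)) 3 then some (0, h.choose)
  else none

theorem balanceStrategy_eq_some {u : List Event} {σ : Event} (h : balanceStrategy P u = some σ) :
    σ.1 = 0 ∧ σ.2 ∈ P.Ps ∪ P.Pse ∧ u.count (0, σ.2) < min (u.count (3, σ.2)) 3 := by
  unfold balanceStrategy at h
  split_ifs at h with hex
  cases h
  exact ⟨rfl, hex.choose_spec⟩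

theorem balanceStrategy_eq_none {u : List Event} (h : balanceStrategy P u = none) :
    ∀ q ∈ P.Ps ∪ P.Pse, min (u.count (3, q)) 3 ≤ u.count (0, q) := by
  unfold balanceStrategy at h
  split_ifs at h with hex
  simpa only [not_exists, not_and, not_lt] using hex

theorem properStrategy_balanceStrategy : properStrategy alph4 P (balanceStrategy P) := by
  intro u σ h
  obtain ⟨h0, hq, -⟩ := balanceStrategy_eq_some h
  exact isSysEvent_alph4_iff.mpr ⟨by omega, by simpa using hq⟩

variable {w : Exec} (hv : w.valid alph4 P) (hc : compatible alph4 P (balanceStrategy P) w)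
include hv hc

theorem count_pre_le_of_compatible (N q : ℕ) :
    (w.pre N).count (0, q) ≤ min ((w.pre N).count (3, q)) 3 := by
  induction N with
  | zero => simp [Exec.pre_zero]
  | succ N ih =>
    rw [Exec.pre_succ]
    cases hσ : w.at? N with
    | none => simpa using ih
    | some σ =>
      by_cases hσq : σ = (0, q)
      · subst hσq
        have hsys := isSysEvent_of_at?_eq_some hv hσ (by simp)
        have hlt := (balanceStrategy_eq_some (hc N _ hσ hsys)).2.2
        have hd : List.count (3, q) [((0 : ℕ), q)] = 0 := by simp
        dsimp only at hlt
        rw [Option.toList_some, List.count_append, List.count_append, List.count_singleton_self, hd]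
        omega
      · simp only [Option.toList_some, List.count_append, List.count_singleton, beq_iff_eq, hσq,
          ↓reduceIte]
        omega

theorem eventually_balanceStrategy_eq_none (hfair : fair alph4 P (balanceStrategy P) w) :
    ∀ᶠ N in atTop, balanceStrategy P (w.pre N) = none := by
  cases w with
  | fin l =>
    refine (eventually_ge_atTop l.length).mono fun N hN => ?_
    rw [Exec.pre_fin_of_length_le hN]
    exact hfair
  | inf g =>
    have ha_finite : ∀ q, {i | (Exec.inf g).at? i = some (0, q)}.Finite := fun q =>
      Nat.finite_setOf_of_count_le 3 fun N => by
        rw [← Exec.count_pre]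
        exact (count_pre_le_of_compatible hv hc N q).trans (min_le_right _ _)
    have hsys_finite : {j | isSysEvent alph4 P (g j)}.Finite := by
      refine ((P.Ps ∪ P.Pse).finite_toSet.biUnion fun q _ => ha_finite q).subset fun j hj => ?_
      obtain ⟨h0, hq, -⟩ := balanceStrategy_eq_some (hc j (g j) rfl hj)
      have hgj : g j = (0, (g j).2) := Prod.ext h0 rfl
      exact Set.mem_biUnion hq (congrArg some hgj)
    have hprop_finite : {i | balanceStrategy P ((Exec.inf g).pre i) ≠ none}.Finite :=
      Set.not_infinite.mp fun hinf => hfair hinf hsys_finite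
    rw [← Nat.cofinite_eq_atTop]
    exact hprop_finite.eventually_cofinite_notMem.mono fun N hN => by simpa using hN

end Balance

theorem balanceStrategy_winning {P : ProcTriple} (hPe : P.Pe = ∅) :
    winningStrategy alph4 P phi4 (balanceStrategy P) := by
  refine ⟨properStrategy_balanceStrategy, fun w hv hc hfair => ?_⟩
  rw [satS_phi4_iff hv]
  intro q hq
  have hq' : q ∈ P.Ps ∪ P.Pse := by simpa [ProcTriple.all, hPe] using hq
  have hbalanced : ∀ᶠ N in atTop, (w.pre N).count (0, q) = min ((w.pre N).count (3, q)) 3 :=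
    (eventually_balanceStrategy_eq_none hv hc hfair).mono fun N hN =>
      (count_pre_le_of_compatible hv hc N q).antisymm (balanceStrategy_eq_none hN q hq')
  have hcount : ∀ v, {i | w.at? i = some v}.encard = 2 ↔ ∀ᶠ N in atTop, (w.pre N).count v = 2 :=
    fun v => mod_cast Exec.encard_setOf_at?_eq_iff v 2
  rw [hcount, hcount]
  exact eventually_congr (hbalanced.mono fun N hN => by omega)

section Spoiler

variable (f : Strategy) (p : ℕ)

def spoilerMove (n : ℕ) (u : List Event) : Event :=
  if n < 2 then (3, p) else (f u).getD (2, p)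

def spoilerPrefix : ℕ → List Event
  | 0 => []
  | n + 1 => spoilerPrefix n ++ [spoilerMove f p n (spoilerPrefix n)]

def spoilerExec : Exec := .inf fun n => spoilerMove f p n (spoilerPrefix f p n)

variable {f p}

theorem pre_spoilerExec (n : ℕ) : (spoilerExec f p).pre n = spoilerPrefix f p n := by
  induction n with
  | zero => rw [Exec.pre_zero]; rfl
  | succ n ih => rw [Exec.pre_succ, ih]; rfl

theorem spoilerExec_at? (n : ℕ) :
    (spoilerExec f p).at? n = some (spoilerMove f p n ((spoilerExec f p).pre n)) := by
  rw [pre_spoilerExec]; rfl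

variable {P : ProcTriple}

theorem spoilerExec_compatible : compatible alph4 P f (spoilerExec f p) := by
  intro n σ hσ hsys
  rw [spoilerExec_at?, Option.some.injEq] at hσ
  subst hσ
  have hletter := (isSysEvent_alph4_iff.mp hsys).1
  unfold spoilerMove at hsys hletter ⊢
  split_ifs at hsys hletter ⊢
  · simp at hletter
  · cases hu : f ((spoilerExec f p).pre n) with
    | none => simp [hu] at hletter
    | some σ => simp

variable (hf : properStrategy alph4 P f)
include hf

theorem spoilerExec_fair : fair alph4 P f (spoilerExec f p) := by
  intro hinf
  refine (hinf.sdiff (Set.finite_Iio 2)).mono fun n hn => ?_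
  obtain ⟨hn, hn2⟩ := hn
  simp only [Set.mem_Iio, not_lt, Set.mem_ofPred_eq] at hn hn2
  obtain ⟨σ, hσ⟩ := Option.ne_none_iff_exists'.mp hn
  change f ((spoilerExec f p).pre n) = some σ at hσ
  rw [pre_spoilerExec] at hσ
  show isSysEvent alph4 P (spoilerMove f p n (spoilerPrefix f p n))
  rw [spoilerMove, if_neg (by omega), hσ]
  exact hf _ σ hσ

variable (hp : p ∈ P.Pe)
include hp

theorem spoilerMove_ne_of_two_le {n : ℕ} (hn : 2 ≤ n) (u : List Event) :
    spoilerMove f p n u ≠ (0, p) ∧ spoilerMove f p n u ≠ (3, p) := by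
  unfold spoilerMove
  rw [if_neg (by omega)]
  cases hu : f u with
  | none => simp
  | some σ =>
    obtain ⟨hσ, hσp⟩ := isSysEvent_alph4_iff.mp (hf u σ hu)
    have hpσ : σ.2 ≠ p := by
      rintro rfl
      rcases hσp with h | h
      · exact Finset.disjoint_left.mp P.disj_se h hp
      · exact Finset.disjoint_left.mp P.disj_ese hp h
    constructor <;> rintro rfl <;> simp_all

theorem spoilerExec_valid : (spoilerExec f p).valid alph4 P := by
  intro n
  show isEvent alph4 P (spoilerMove f p n (spoilerPrefix f p n))
  unfold spoilerMove
  split_ifs with hn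
  · exact Or.inr (isEnvEvent_alph4_iff.mpr ⟨by simp, by simp, Or.inl hp⟩)
  · cases hu : f (spoilerPrefix f p n) with
    | none => exact Or.inr (isEnvEvent_alph4_iff.mpr ⟨by simp, by simp, Or.inl hp⟩)
    | some σ => exact Or.inl (hf _ σ hu)

theorem not_satS_spoilerExec : ¬ SatS P (spoilerExec f p) phi4 := by
  have hpos : ∀ n, (spoilerExec f p).at? n = some (3, p) ↔ n < 2 := fun n => by
    rw [spoilerExec_at?, Option.some.injEq]
    by_cases hn : n < 2
    · simp [spoilerMove, hn]
    · simp [hn, (spoilerMove_ne_of_two_le hf hp (not_lt.mp hn) _).2]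
  have hd : {i | (spoilerExec f p).at? i = some (3, p)} = {0, 1} := by
    ext n; simp [hpos]; omega
  have ha : {i | (spoilerExec f p).at? i = some (0, p)} = ∅ := by
    ext n
    simp only [Set.mem_ofPred_eq, Set.mem_empty_iff_false, iff_false]
    rw [spoilerExec_at?, Option.some.injEq]
    by_cases hn : n < 2
    · simp [spoilerMove, hn]
    · exact (spoilerMove_ne_of_two_le hf hp (not_lt.mp hn) _).1
  rw [satS_phi4_iff (spoilerExec_valid hf hp)]
  intro h
  have := (h p (by simp [ProcTriple.all, hp])).mpr (by rw [hd]; exact Set.encard_pair zero_ne_one)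
  simp [ha] at this

end Spoiler

theorem not_winningStrategy_of_mem_Pe {P : ProcTriple} {f : Strategy} {p : ℕ} (hp : p ∈ P.Pe) :
    ¬ winningStrategy alph4 P phi4 f := fun ⟨hf, hwin⟩ =>
  not_satS_spoilerExec hf hp (hwin _ (spoilerExec_valid hf hp) spoilerExec_compatible
    (spoilerExec_fair hf))

theorem exists_procTriple_card (m n : ℕ) :
    ∃ P : ProcTriple, P.Ps.card = m ∧ P.Pe = ∅ ∧ P.Pse.card = n :=
  ⟨⟨Finset.range m, ∅, Finset.Ico m (m + n), Finset.disjoint_empty_right _,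
      Finset.range_eq_Ico m ▸ Finset.Ico_disjoint_Ico_consecutive 0 m (m + n),
      Finset.disjoint_empty_left _⟩,
    Finset.card_range m, rfl, by simp⟩

/-- Over the alphabet `A_s = {a,b}`, `A_e = {c,d}`, the sentence
`φ_4` satisfies `Win(φ_4) = ℕ × {0} × ℕ`. -/
theorem win_phi4 : WinFO alph4 phi4 = { k : Tok | k.2.1 = 0 } := by
  ext ⟨ks, ke, kse⟩
  simp only [WinFO, Set.mem_ofPred_eq]
  constructor
  · rintro ⟨P, -, rfl, -, f, hwin⟩
    by_contra hne
    obtain ⟨p, hp⟩ := Finset.card_pos.mp (Nat.pos_of_ne_zero hne)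
    exact not_winningStrategy_of_mem_Pe hp hwin
  · rintro rfl
    obtain ⟨P, hs, he, hse⟩ := exists_procTriple_card ks kse
    exact ⟨P, hs, by simp [he], hse, balanceStrategy P, balanceStrategy_winning he⟩

end PSyn
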